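/- arXiv:math/0009086 — 3 statements merged into one kernel-verified Lean document; each statement's English description precedes it below -/
import Mathlib

section
/- Let G be a groupoid on a topological space X and H a wide subgroupoid of G. Let s be a local subgroupoid of G given by the atlas {(Uₓ, Hₓ)}, let 𝓤 = {Uₓ}, and for each open cover 𝓥 = {Vₓ} refining 𝓤 (x ∈ Vₓ ⊆ Uₓ) let H_𝓥 be the subgroupoid of G generated by {Hₓ|Vₓ : x ∈ X}. Then glob(s) = ⋂ {H_𝓥 : 𝓥 ≤ 𝓤}. -/
open CategoryTheory

universe u v

variable {X : Type u} [TopologicalSpace X] [Groupoid.{v} X]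

/-- The set of arrows of a groupoid `G` with object set `X`. -/
abbrev Arr (X : Type u) [Groupoid.{v} X] : Type (max u v) := Σ x y : X, x ⟶ y

/-- The arrow `⟨x, y, f⟩` determined by `f : x ⟶ y`. -/
def mkArr {x y : X} (f : x ⟶ y) : Arr X := ⟨x, y, f⟩

/-- The restriction `S|V` of a set of arrows to those with source and target in `V`. -/
def rstr (S : Set (Arr X)) (V : Set X) : Set (Arr X) :=
  {a | a ∈ S ∧ a.1 ∈ V ∧ a.2.1 ∈ V}

/-- `S` is (the arrow set of) a wide subgroupoid of `G|U`: all its arrows have source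
and target in `U`, it contains all identities of points of `U`, and it is closed
under composition and inverse. -/
def IsSubgpdOn (U : Set X) (S : Set (Arr X)) : Prop :=
  (∀ a ∈ S, a.1 ∈ U ∧ a.2.1 ∈ U) ∧
  (∀ x ∈ U, mkArr (𝟙 x) ∈ S) ∧
  (∀ ⦃x y z : X⦄ (f : x ⟶ y) (g : y ⟶ z), mkArr f ∈ S → mkArr g ∈ S →
    mkArr (f ≫ g) ∈ S) ∧
  (∀ ⦃x y : X⦄ (f : x ⟶ y), mkArr f ∈ S → mkArr (Groupoid.inv f) ∈ S)

/-- The wide subgroupoid of `G|U` generated by a set `S` of arrows. -/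
def gen (U : Set X) (S : Set (Arr X)) : Set (Arr X) :=
  ⋂₀ {T | IsSubgpdOn U T ∧ S ⊆ T}

/-- An atlas `{(Uₓ, Hₓ) : x ∈ Y}` for a local subgroupoid of `G` over the open set `Y`:
each `Uₓ` is an open neighbourhood of `x` in `Y`, `Hₓ` is a wide subgroupoid of `G|Uₓ`,
and any two charts agree locally (local compatibility). -/
def IsAtlas (Y : Set X) (U : X → Set X) (H : X → Set (Arr X)) : Prop :=
  (∀ x ∈ Y, IsOpen (U x) ∧ x ∈ U x ∧ U x ⊆ Y ∧ IsSubgpdOn (U x) (H x)) ∧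
  (∀ x ∈ Y, ∀ y ∈ Y, ∀ z ∈ U x ∩ U y, ∃ W, IsOpen W ∧ z ∈ W ∧ W ⊆ U x ∩ U y ∧
    rstr (H x) W = rstr (H y) W)

/-- `s ≤ loc(K)` for the local subgroupoid `s` given by the atlas `(U, H)` over `Y`:
at every point of `Y` the germ of the chart is contained in the germ of `K`. -/
def leLoc (Y : Set X) (U : X → Set X) (H : X → Set (Arr X)) (K : Set (Arr X)) : Prop :=
  ∀ x ∈ Y, ∃ W, IsOpen W ∧ x ∈ W ∧ W ⊆ U x ∩ Y ∧ rstr (H x) W ⊆ rstr K W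

/-- `glob(s)`: the intersection of all wide subgroupoids `K` of `G|Y`
with `s ≤ loc(K)`. -/
def glob (Y : Set X) (U : X → Set X) (H : X → Set (Arr X)) : Set (Arr X) :=
  ⋂₀ {K | IsSubgpdOn Y K ∧ leLoc Y U H K}

/-- The transitivity component of `x` in the (sub)groupoid with arrow set `S`. -/
def tcomp (S : Set (Arr X)) (x : X) : Set X := {y | ∃ f : x ⟶ y, mkArr f ∈ S}

/-- `s` (given by the atlas `(U,H)` over `Y`) is coherent: `s ≤ loc(glob(s))`. -/
def Coherent (Y : Set X) (U : X → Set X) (H : X → Set (Arr X)) : Prop :=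
  leLoc Y U H (glob Y U H)

/-- `s` is globally coherent: `s = loc(glob(s))`, i.e. at each point the germ of the
chart equals the germ of `glob(s)`. -/
def GloballyCoherent (Y : Set X) (U : X → Set X) (H : X → Set (Arr X)) : Prop :=
  ∀ x ∈ Y, ∃ W, IsOpen W ∧ x ∈ W ∧ W ⊆ U x ∩ Y ∧ rstr (H x) W = rstr (glob Y U H) W

/-- The covers `𝓥 ≤ 𝓤` of the paper. -/
def refinements (U : X → Set X) : Set (X → Set X) :=
  {V | ∀ x, IsOpen (V x) ∧ x ∈ V x ∧ V x ⊆ U x}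

/-- `H_𝓥` of the paper. -/
def coverGen (H : X → Set (Arr X)) (V : X → Set X) : Set (Arr X) :=
  gen Set.univ (⋃ x, rstr (H x) (V x))

section

variable {U : X → Set X} {H : X → Set (Arr X)} {K : Set (Arr X)}

theorem leLoc_univ_iff :
    leLoc Set.univ U H K ↔ ∃ V ∈ refinements U, ∀ x, rstr (H x) (V x) ⊆ K := by
  constructor
  · intro hK
    choose V hVopen hxV hVU hHK using fun x => hK x trivial
    exact ⟨V, fun x => ⟨hVopen x, hxV x, fun _ hy => (hVU x hy).1⟩,
      fun x => (hHK x).trans fun _ hb => hb.1⟩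
  · rintro ⟨V, hV, hHK⟩ x -
    refine ⟨V x, (hV x).1, (hV x).2.1, fun _ hy => ⟨(hV x).2.2 hy, trivial⟩, ?_⟩
    intro b hb
    exact ⟨hHK x hb, hb.2⟩

theorem glob_subset_coverGen {V : X → Set X} (hV : V ∈ refinements U) :
    glob Set.univ U H ⊆ coverGen H V :=
  Set.subset_sInter fun _ ⟨hT, hHT⟩ => Set.sInter_subset_of_mem
    ⟨hT, leLoc_univ_iff.2 ⟨V, hV, fun x => (Set.subset_iUnion _ x).trans hHT⟩⟩

theorem iInter_coverGen_subset_glob :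
    ⋂ V ∈ refinements U, coverGen H V ⊆ glob Set.univ U H := by
  refine Set.subset_sInter fun K ⟨hK, hloc⟩ => ?_
  obtain ⟨V, hV, hHK⟩ := leLoc_univ_iff.1 hloc
  exact (Set.biInter_subset_of_mem hV).trans
    (Set.sInter_subset_of_mem ⟨hK, Set.iUnion_subset hHK⟩)

end

theorem stmt12_general (U : X → Set X) (H : X → Set (Arr X)) :
    glob Set.univ U H =
      ⋂ V ∈ {V : X → Set X | ∀ x, IsOpen (V x) ∧ x ∈ V x ∧ V x ⊆ U x},
        gen Set.univ (⋃ x, rstr (H x) (V x)) := by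
  apply Set.Subset.antisymm
  · exact Set.subset_iInter₂ fun V hV => glob_subset_coverGen hV
  · exact iInter_coverGen_subset_glob

/-- For a local subgroupoid `s` of `G` given by an atlas `{(Uₓ, Hₓ)}` and, for each
open cover `𝓥 = {Vₓ}` refining `𝓤 = {Uₓ}` (with `x ∈ Vₓ ⊆ Uₓ`), letting `H_𝓥` be the
subgroupoid generated by the restrictions `Hₓ|Vₓ`, one has
`glob(s) = ⋂ {H_𝓥 : 𝓥 ≤ 𝓤}`. -/
theorem stmt12 (U : X → Set X) (H : X → Set (Arr X))
    (hA : IsAtlas Set.univ U H) :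
    glob Set.univ U H =
      ⋂ V ∈ {V : X → Set X | ∀ x, IsOpen (V x) ∧ x ∈ V x ∧ V x ⊆ U x},
        gen Set.univ (⋃ x, rstr (H x) (V x)) :=
  stmt12_general U H
end

section
/- Let H be a wide subgroupoid of a groupoid G on a topological space X and s = loc(H). For any open cover 𝓥 = {Vₓ} of X, the transitivity components of the subgroupoid H_𝓥 generated by {H|Vₓ} are relatively open and relatively closed in the transitivity components of H. -/
open CategoryTheory

universe u v

variable {X : Type u} [TopologicalSpace X] [Groupoid.{v} X]

/-!
Inside a transitivity component `C` of `H`, any two points `y, y'` are joined by an arrow of `H`;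
if moreover `y' ∈ V y`, that arrow lies in `H|V y`, hence in `H_𝓥`. So membership in a
transitivity component of `H_𝓥` is constant on each relatively open set `V y ∩ C`, i.e. it is a
locally constant predicate on `C`, and its fibres are clopen.
-/

section

variable {Γ : Type*} [Groupoid Γ]

lemma subset_gen (U : Set Γ) (S : Set (Arr Γ)) : S ⊆ gen U S :=
  fun _ ha => Set.mem_sInter.mpr fun _ hT => hT.2 ha

lemma isSubgpdOn_univ_gen (S : Set (Arr Γ)) : IsSubgpdOn Set.univ (gen Set.univ S) := by
  refine ⟨fun _ _ => ⟨trivial, trivial⟩, fun x _ => ?_, fun x y z f g hf hg => ?_,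
    fun x y f hf => ?_⟩ <;> refine Set.mem_sInter.mpr fun T hT => ?_
  · exact hT.1.2.1 x trivial
  · exact hT.1.2.2.1 f g (Set.mem_sInter.mp hf T hT) (Set.mem_sInter.mp hg T hT)
  · exact hT.1.2.2.2 f (Set.mem_sInter.mp hf T hT)

lemma IsSubgpdOn.exists_hom_of_mem_tcomp {U : Set Γ} {K : Set (Arr Γ)} (hK : IsSubgpdOn U K)
    {x y y' : Γ} (hy : y ∈ tcomp K x) (hy' : y' ∈ tcomp K x) :
    ∃ h : y ⟶ y', mkArr h ∈ K := by
  obtain ⟨g, hg⟩ := hy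
  obtain ⟨g', hg'⟩ := hy'
  exact ⟨Groupoid.inv g ≫ g', hK.2.2.1 _ _ (hK.2.2.2 g hg) hg'⟩

lemma IsSubgpdOn.mem_tcomp_iff_of_hom {U : Set Γ} {K : Set (Arr Γ)} (hK : IsSubgpdOn U K)
    {x y y' : Γ} (h : y ⟶ y') (hh : mkArr h ∈ K) :
    y ∈ tcomp K x ↔ y' ∈ tcomp K x :=
  ⟨fun ⟨f, hf⟩ => ⟨f ≫ h, hK.2.2.1 f h hf hh⟩,
    fun ⟨f', hf'⟩ => ⟨f' ≫ Groupoid.inv h, hK.2.2.1 _ _ hf' (hK.2.2.2 h hh)⟩⟩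

end

lemma isLocallyConstant_mem_tcomp_gen {H : Set (Arr X)} (hH : IsSubgpdOn Set.univ H)
    {V : X → Set X} (hV : ∀ x, IsOpen (V x) ∧ x ∈ V x) (x : X) :
    IsLocallyConstant fun y : tcomp H x =>
      (y : X) ∈ tcomp (gen Set.univ (⋃ z, rstr H (V z))) x := by
  refine (IsLocallyConstant.iff_exists_open _).mpr fun y => ?_
  refine ⟨Subtype.val ⁻¹' V y, (hV y).1.preimage continuous_subtype_val, (hV y).2,
    fun y' hy' => ?_⟩
  obtain ⟨h, hh⟩ := hH.exists_hom_of_mem_tcomp y.2 y'.2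
  have hhV : mkArr h ∈ ⋃ z, rstr H (V z) := Set.mem_iUnion.mpr ⟨y, hh, (hV y).2, hy'⟩
  exact propext ((isSubgpdOn_univ_gen _).mem_tcomp_iff_of_hom h (subset_gen _ _ hhV)).symm

/-- Let `H` be a wide subgroupoid of `G` on `X` (and `s = loc(H)`).  For any open
cover `𝓥 = {Vₓ}` of `X`, the transitivity components of the subgroupoid `H_𝓥`
generated by the restrictions `H|Vₓ` are relatively open and relatively closed in
the transitivity components of `H`. -/
theorem stmt13 (H : Set (Arr X)) (hH : IsSubgpdOn Set.univ H)
    (V : X → Set X) (hV : ∀ x, IsOpen (V x) ∧ x ∈ V x) :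
    ∀ x : X,
      IsOpen {y : tcomp H x | (y : X) ∈ tcomp (gen Set.univ (⋃ z, rstr H (V z))) x} ∧
      IsClosed {y : tcomp H x | (y : X) ∈ tcomp (gen Set.univ (⋃ z, rstr H (V z))) x} := by
  intro x
  have hfib := (isLocallyConstant_mem_tcomp_gen hH hV x).isClopen_fiber True
  simp only [eq_iff_iff, iff_true] at hfib
  exact ⟨hfib.isOpen, hfib.isClosed⟩
end

section
/- Let H be a wide subgroupoid of a groupoid G on X and s = loc(H). If every point x ∈ X has an open neighborhood Wₓ such that H|Wₓ has connected transitivity components (in the subspace topology), then s is coherent, i.e., s ≤ loc(glob(s)). -/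
open CategoryTheory

universe u v

variable {X : Type u} [TopologicalSpace X] [Groupoid.{v} X]

open Topology

/-!
Fix `f : a ⟶ b` in `H|W` and a wide subgroupoid `K` with `loc(H) ≤ loc(K)`, so that `K`
contains `H|N_z` for a neighbourhood `N_z` of each point `z`. Along the transitivity component
`C` of `a` in `H|W`, any two points of `C ∩ N_z` are joined by an arrow of `H|N_z ⊆ H ∩ K`:
the subgroupoid `H ∩ K` is locally transitive on `C`, hence transitive on `C` since `C` is
connected. This gives `g : a ⟶ b` in `H ∩ K`, and then `f = g ≫ (g⁻¹ ≫ f)` lies in `K`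
because the loop `g⁻¹ ≫ f` of `H` at `b` lies in `H|N_b ⊆ K`.
-/

namespace IsSubgpdOn

omit [TopologicalSpace X]

variable {U : Set X} {S T : Set (Arr X)}

theorem id_mem (hS : IsSubgpdOn U S) {x : X} (hx : x ∈ U) : mkArr (𝟙 x) ∈ S :=
  hS.2.1 x hx

theorem comp_mem (hS : IsSubgpdOn U S) {x y z : X} {f : x ⟶ y} {g : y ⟶ z}
    (hf : mkArr f ∈ S) (hg : mkArr g ∈ S) : mkArr (f ≫ g) ∈ S :=
  hS.2.2.1 f g hf hg

theorem inv_mem (hS : IsSubgpdOn U S) {x y : X} {f : x ⟶ y} (hf : mkArr f ∈ S) :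
    mkArr (Groupoid.inv f) ∈ S :=
  hS.2.2.2 f hf

theorem inter (hS : IsSubgpdOn U S) (hT : IsSubgpdOn U T) : IsSubgpdOn U (S ∩ T) :=
  ⟨fun a ha => hS.1 a ha.1, fun _ hx => ⟨hS.id_mem hx, hT.id_mem hx⟩,
    fun _ _ _ _ _ hf hg => ⟨hS.comp_mem hf.1 hg.1, hT.comp_mem hf.2 hg.2⟩,
    fun _ _ _ hf => ⟨hS.inv_mem hf.1, hT.inv_mem hf.2⟩⟩

theorem exists_hom_of_mem_tcomp_s14 (hS : IsSubgpdOn U S) {a z z' : X} (hz : z ∈ tcomp S a)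
    (hz' : z' ∈ tcomp S a) : ∃ h : z ⟶ z', mkArr h ∈ S :=
  let ⟨p, hp⟩ := hz
  let ⟨q, hq⟩ := hz'
  ⟨Groupoid.inv p ≫ q, hS.comp_mem (hS.inv_mem hp) hq⟩

end IsSubgpdOn

omit [TopologicalSpace X] in
theorem tcomp_mono {S T : Set (Arr X)} (hST : S ⊆ T) (a : X) : tcomp S a ⊆ tcomp T a :=
  fun _ ⟨f, hf⟩ => ⟨f, hST hf⟩

theorem leLoc.exists_nhds {Y : Set X} {U : X → Set X} {H : X → Set (Arr X)} {K : Set (Arr X)}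
    (hK : leLoc Y U H K) {x : X} (hx : x ∈ Y) : ∃ N ∈ 𝓝 x, rstr (H x) N ⊆ K :=
  let ⟨W, hWo, hxW, _, hHK⟩ := hK x hx
  ⟨W, hWo.mem_nhds hxW, fun _ ha => (hHK ha).1⟩

theorem IsPreconnected.exists_hom_of_eventually {U C : Set X} {S : Set (Arr X)}
    (hS : IsSubgpdOn U S) (hC : IsPreconnected C)
    (hloc : ∀ z ∈ C, ∀ᶠ z' in 𝓝[C] z, ∃ h : z ⟶ z', mkArr h ∈ S)
    {a b : X} (ha : a ∈ C) (hb : b ∈ C) : ∃ g : a ⟶ b, mkArr g ∈ S :=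
  hC.induction₂' (fun x y => ∃ g : x ⟶ y, mkArr g ∈ S)
    (fun z hz => (hloc z hz).mono fun _ ⟨h, hh⟩ => ⟨⟨h, hh⟩, ⟨_, hS.inv_mem hh⟩⟩)
    (fun _ _ _ _ _ _ ⟨g, hg⟩ ⟨h, hh⟩ => ⟨g ≫ h, hS.comp_mem hg hh⟩) ha hb

theorem eventually_exists_hom_inter {U C : Set X} {S K : Set (Arr X)} {a : X}
    (hS : IsSubgpdOn U S) (hCS : C ⊆ tcomp S a) (hK : ∀ z ∈ C, ∃ N ∈ 𝓝 z, rstr S N ⊆ K) :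
    ∀ z ∈ C, ∀ᶠ z' in 𝓝[C] z, ∃ h : z ⟶ z', mkArr h ∈ S ∩ K := by
  intro z hz
  obtain ⟨N, hN, hSK⟩ := hK z hz
  filter_upwards [self_mem_nhdsWithin, mem_nhdsWithin_of_mem_nhds hN] with z' hz'C hz'N
  obtain ⟨h, hh⟩ := hS.exists_hom_of_mem_tcomp_s14 (hCS hz) (hCS hz'C)
  exact ⟨h, hh, hSK ⟨hh, mem_of_mem_nhds hN, hz'N⟩⟩

/-- Let `H` be a wide subgroupoid of `G` on `X` and `s = loc(H)`.  If every point
`x ∈ X` has an open neighbourhood `Wₓ` on which `H|Wₓ` has connected transitivity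
components, then `s` is coherent, i.e. `s ≤ loc(glob(s))`. -/
theorem stmt14 (H : Set (Arr X)) (hH : IsSubgpdOn Set.univ H)
    (hconn : ∀ x : X, ∃ W, IsOpen W ∧ x ∈ W ∧
      ∀ y ∈ W, IsConnected (tcomp (rstr H W) y)) :
    Coherent Set.univ (fun _ => Set.univ) (fun _ => H) := by
  intro x _
  obtain ⟨W, hWo, hxW, hWconn⟩ := hconn x
  refine ⟨W, hWo, hxW, by simp, ?_⟩
  rintro ⟨a, b, f⟩ ⟨hf, ha, hb⟩
  refine ⟨Set.mem_sInter.2 fun K ⟨hK, hHK⟩ => ?_, ha, hb⟩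
  have hKnhds (z : X) : ∃ N ∈ 𝓝 z, rstr H N ⊆ K := hHK.exists_nhds (Set.mem_univ z)
  have haC : a ∈ tcomp (rstr H W) a := ⟨𝟙 a, hH.id_mem (Set.mem_univ a), ha, ha⟩
  have hbC : b ∈ tcomp (rstr H W) a := ⟨f, hf, ha, hb⟩
  obtain ⟨g, hgH, hgK⟩ := (hWconn a ha).isPreconnected.exists_hom_of_eventually (hH.inter hK)
    (eventually_exists_hom_inter hH (tcomp_mono (fun _ h => h.1) a) fun z _ => hKnhds z) haC hbC
  obtain ⟨N, hN, hNK⟩ := hKnhds b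
  have hloop : mkArr (Groupoid.inv g ≫ f) ∈ K :=
    hNK ⟨hH.comp_mem (hH.inv_mem hgH) hf, mem_of_mem_nhds hN, mem_of_mem_nhds hN⟩
  simpa [mkArr] using hK.comp_mem hgK hloop
end
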